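/- arXiv:2005.09603 — 2 statements merged into one kernel-verified Lean document; each statement's English description precedes it below -/
import Mathlib

section
/- Let λ, μ, ν, ϑ, α, β be real numbers satisfying ϑ² + λϑ = μ²/4, α + β = 2ϑ + λ + 1/2, and αβ = ϑ² + ϑ/2 + λϑ − ν(ν+1)/4. Suppose M : ℝ → ℝ is twice differentiable on (0,1) and satisfies the Gaussian hypergeometric differential equation with parameters α, β and lower parameter γ = 1/2, i.e. z(1−z)·M''(z) + [1/2 − (α+β+1)z]·M'(z) − αβ·M(z) = 0 for all z ∈ (0,1). Then the function H(x) := (1−x²)^ϑ · M(x²) satisfies the hyperspherical associated Legendre differential equation of degree ν, order μ and dimension λ, namely (1−x²)·H''(x) − 2(1+λ)x·H'(x) + [ν(ν+1) − μ²/(1−x²)]·H(x) = 0, for all x ∈ (−1,1) with x ≠ 0. -/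
/-!
With `m x = M (x²)`, the substitution `z = x²` turns the hypergeometric equation with `γ = 1/2`
into `(1 - x²) m'' - (2(α + β) + 1) x m' - 4αβ m = 0`. The gauge factor `(1 - x²)^ϑ` has
logarithmic derivative `-2ϑx / (1 - x²)`, so `H = (1 - x²)^ϑ m` satisfies an equation of the same
shape with an extra term `-4ϑ(ϑ + λ) / (1 - x²) · H = -μ² / (1 - x²) · H`; the relations for
`α + β` and `αβ` then match the remaining coefficients with the Legendre ones.
-/

open Set Filter Topology

theorem HasDerivAt.comp_sq {f : ℝ → ℝ} {f' x : ℝ} (hf : HasDerivAt f f' (x ^ 2)) :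
    HasDerivAt (fun t => f (t ^ 2)) (2 * x * f') x := by
  refine (HasDerivAt.comp (h := fun t : ℝ => t ^ 2) x hf (hasDerivAt_pow 2 x)).congr_deriv ?_
  simp only [Nat.cast_ofNat, Nat.add_one_sub_one, pow_one]
  ring

theorem eventually_hasDerivAt_comp_sq {M : ℝ → ℝ} {s : Set ℝ} (hs : IsOpen s)
    (hM : ∀ z ∈ s, DifferentiableAt ℝ M z) {x : ℝ} (hx : x ^ 2 ∈ s) :
    ∀ᶠ y in 𝓝 x, HasDerivAt (fun t => M (t ^ 2)) (2 * y * deriv M (y ^ 2)) y := by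
  filter_upwards [(hs.preimage (continuous_pow 2)).mem_nhds hx] with y hy
  exact (hM _ hy).hasDerivAt.comp_sq

theorem hasDerivAt_one_sub_sq_rpow_mul {th x m' : ℝ} {m : ℝ → ℝ} (hx : 1 - x ^ 2 ≠ 0)
    (hm : HasDerivAt m m' x) :
    HasDerivAt (fun y => (1 - y ^ 2) ^ th * m y)
      ((1 - x ^ 2) ^ th * (m' - 2 * th * (x / (1 - x ^ 2)) * m x)) x := by
  have hp := ((hasDerivAt_pow 2 x).const_sub 1).rpow_const (p := th) (Or.inl hx)
  refine (hp.mul hm).congr_deriv ?_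
  rw [Real.rpow_sub_one hx]
  field_simp
  ring

theorem hyperspherical_legendre_ode_of_gauge {lam mu nu th x : ℝ} {m m' : ℝ → ℝ} {m'' : ℝ}
    (hth : th ^ 2 + lam * th = mu ^ 2 / 4) (hx : 1 - x ^ 2 ≠ 0)
    (hm : ∀ᶠ y in 𝓝 x, HasDerivAt m (m' y) y) (hm' : HasDerivAt m' m'' x)
    (hode : (1 - x ^ 2) * m'' - 2 * (2 * th + lam + 1) * x * m' x
      - (4 * th ^ 2 + 2 * th + 4 * lam * th - nu * (nu + 1)) * m x = 0) :
    (1 - x ^ 2) * deriv (deriv fun y => (1 - y ^ 2) ^ th * m y) x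
      - 2 * (1 + lam) * x * deriv (fun y => (1 - y ^ 2) ^ th * m y) x
      + (nu * (nu + 1) - mu ^ 2 / (1 - x ^ 2)) * ((1 - x ^ 2) ^ th * m x) = 0 := by
  have hw : ∀ᶠ y in 𝓝 x, 1 - y ^ 2 ≠ 0 :=
    (continuous_const.sub (continuous_pow 2)).continuousAt.eventually_ne hx
  have hH' : deriv (fun y => (1 - y ^ 2) ^ th * m y) =ᶠ[𝓝 x]
      fun y => (1 - y ^ 2) ^ th * (m' y - 2 * th * (y / (1 - y ^ 2)) * m y) := by
    filter_upwards [hm, hw] with y hy hwy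
    exact (hasDerivAt_one_sub_sq_rpow_mul hwy hy).deriv
  have hq : HasDerivAt (fun y => y / (1 - y ^ 2)) ((1 + x ^ 2) / (1 - x ^ 2) ^ 2) x := by
    refine ((hasDerivAt_id x).div ((hasDerivAt_pow 2 x).const_sub 1) hx).congr_deriv ?_
    simp only [one_mul, id_eq, Nat.cast_ofNat, Nat.add_one_sub_one, pow_one, mul_neg,
      sub_neg_eq_add]
    ring
  have hg := hm'.sub ((hq.const_mul (2 * th)).mul hm.self_of_nhds)
  have hH'' := (hasDerivAt_one_sub_sq_rpow_mul hx hg).congr_of_eventuallyEq hH'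
  rw [hH''.deriv, (hasDerivAt_one_sub_sq_rpow_mul hx hm.self_of_nhds).deriv,
    Pi.sub_apply, Pi.mul_apply]
  field_simp
  linear_combination (1 - x ^ 2) ^ th * (1 - x ^ 2) * hode + 4 * (1 - x ^ 2) ^ th * m x * hth

/-- the substitution `H x = (1 - x²)^ϑ · M (x²)` turns a solution `M` of the
Gaussian hypergeometric equation with lower parameter `1/2` (with the stated parameter
relations) into a solution of the hyperspherical associated Legendre equation. -/
theorem hypergeometric_to_hyperspherical_associated_legendre
    (lam mu nu th a b : ℝ)
    (hth : th ^ 2 + lam * th = mu ^ 2 / 4)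
    (hsum : a + b = 2 * th + lam + 1 / 2)
    (hprod : a * b = th ^ 2 + th / 2 + lam * th - nu * (nu + 1) / 4)
    (M : ℝ → ℝ)
    (hM : ∀ z ∈ Set.Ioo (0 : ℝ) 1, DifferentiableAt ℝ M z)
    (hM' : ∀ z ∈ Set.Ioo (0 : ℝ) 1, DifferentiableAt ℝ (deriv M) z)
    (hode : ∀ z ∈ Set.Ioo (0 : ℝ) 1,
      z * (1 - z) * deriv (deriv M) z + (1 / 2 - (a + b + 1) * z) * deriv M z
        - a * b * M z = 0)
    (H : ℝ → ℝ) (hH : ∀ x, H x = (1 - x ^ 2) ^ th * M (x ^ 2)) :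
    ∀ x ∈ Set.Ioo (-1 : ℝ) 1, x ≠ 0 →
      (1 - x ^ 2) * deriv (deriv H) x - 2 * (1 + lam) * x * deriv H x
        + (nu * (nu + 1) - mu ^ 2 / (1 - x ^ 2)) * H x = 0 := by
  rintro x ⟨hx₁, hx₂⟩ hx₀
  have hz : x ^ 2 ∈ Ioo (0 : ℝ) 1 := ⟨by positivity, by nlinarith⟩
  rw [show H = fun y => (1 - y ^ 2) ^ th * M (y ^ 2) from funext hH]
  refine hyperspherical_legendre_ode_of_gauge hth (by linarith [hz.2])
    (eventually_hasDerivAt_comp_sq isOpen_Ioo hM hz)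
    (((hasDerivAt_id' x).const_mul 2).mul (hM' _ hz).hasDerivAt.comp_sq) ?_
  linear_combination 4 * hode _ hz + 4 * x ^ 2 * deriv M (x ^ 2) * hsum + 4 * M (x ^ 2) * hprod
end

section
/- Let λ, μ, ν be real numbers and suppose J : ℝ → ℝ is twice differentiable on (−1,1) and satisfies (1−x²)·J''(x) + 2[μ − (1+λ)x]·J'(x) + [ν(ν+1) − 2λμx/(1−x²)]·J(x) = 0 for all x ∈ (−1,1). Then the function H(x) := ((1+x)/(1−x))^{μ/2} · J(x) satisfies the hyperspherical associated Legendre differential equation of degree ν, order μ and dimension λ, namely (1−x²)·H''(x) − 2(1+λ)x·H'(x) + [ν(ν+1) − μ²/(1−x²)]·H(x) = 0, for all x ∈ (−1,1). -/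
/-!
The weight `W x = ((1 + x) / (1 - x)) ^ (μ / 2)` has logarithmic derivative `a x = μ / (1 - x ^ 2)`,
so `(W J)'' = W ((a' + a²) J + 2 a J' + J'')`. Substituting into the Legendre operator, the terms
`(1 - x²)(a' + a²) - 2(1 + λ) x a - μ² / (1 - x²)` collapse to `-2λμx / (1 - x²)`, and the
operator applied to `H = W J` is `W` times the operator of the equation satisfied by `J`.
-/

open Set Filter Topology

theorem hasDerivAt_one_add_div_one_sub_rpow {x : ℝ} (hx : x ∈ Ioo (-1 : ℝ) 1) (p : ℝ) :
    HasDerivAt (fun t => ((1 + t) / (1 - t)) ^ p)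
      (((1 + x) / (1 - x)) ^ p * (2 * p / (1 - x ^ 2))) x := by
  obtain ⟨hx₁, hx₂⟩ := hx
  have hpos : 0 < (1 + x) / (1 - x) := div_pos (by linarith) (by linarith)
  have hquot : HasDerivAt (fun t => (1 + t) / (1 - t))
      ((1 * (1 - x) - (1 + x) * -1) / (1 - x) ^ 2) x :=
    ((hasDerivAt_id x).const_add 1).fun_div ((hasDerivAt_id x).const_sub 1) (by linarith)
  refine (hquot.rpow_const (p := p) (Or.inl hpos.ne')).congr_deriv ?_
  rw [Real.rpow_sub hpos, Real.rpow_one, show (1 : ℝ) - x ^ 2 = (1 + x) * (1 - x) by ring]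
  field_simp
  ring

section LogarithmicDerivative

variable {W a J : ℝ → ℝ}

theorem hasDerivAt_mul_of_hasDerivAt_self_mul {y : ℝ} (hW : HasDerivAt W (W y * a y) y)
    (hJ : DifferentiableAt ℝ J y) :
    HasDerivAt (fun t => W t * J t) (W y * (a y * J y + deriv J y)) y :=
  (hW.fun_mul hJ.hasDerivAt).congr_deriv (by ring)

theorem deriv_deriv_mul_of_hasDerivAt_self_mul {s : Set ℝ} {x a' : ℝ} (hs : IsOpen s)
    (hx : x ∈ s) (hW : ∀ y ∈ s, HasDerivAt W (W y * a y) y)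
    (hJ : ∀ y ∈ s, DifferentiableAt ℝ J y) (ha : HasDerivAt a a' x)
    (hJ' : DifferentiableAt ℝ (deriv J) x) :
    deriv (deriv fun t => W t * J t) x
      = W x * ((a' + a x ^ 2) * J x + 2 * a x * deriv J x + deriv (deriv J) x) := by
  have hderiv : deriv (fun t => W t * J t) =ᶠ[𝓝 x] fun y => W y * (a y * J y + deriv J y) := by
    filter_upwards [hs.mem_nhds hx] with y hy
    exact (hasDerivAt_mul_of_hasDerivAt_self_mul (hW y hy) (hJ y hy)).deriv
  rw [hderiv.deriv_eq, ((hW x hx).fun_mul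
    ((ha.fun_mul (hJ x hx).hasDerivAt).fun_add hJ'.hasDerivAt)).deriv]
  ring

end LogarithmicDerivative

/-- the substitution `H x = ((1+x)/(1−x))^{μ/2} · J x` turns a solution `J` of
`(1−x²)J'' + 2[μ − (1+λ)x]J' + [ν(ν+1) − 2λμx/(1−x²)]J = 0` on `(−1,1)` into a solution of
the hyperspherical associated Legendre equation on `(−1,1)`. -/
theorem power_factor_to_hyperspherical_associated_legendre
    (lam mu nu : ℝ)
    (J : ℝ → ℝ)
    (hJ : ∀ x ∈ Set.Ioo (-1 : ℝ) 1, DifferentiableAt ℝ J x)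
    (hJ' : ∀ x ∈ Set.Ioo (-1 : ℝ) 1, DifferentiableAt ℝ (deriv J) x)
    (hode : ∀ x ∈ Set.Ioo (-1 : ℝ) 1,
      (1 - x ^ 2) * deriv (deriv J) x + 2 * (mu - (1 + lam) * x) * deriv J x
        + (nu * (nu + 1) - 2 * lam * mu * x / (1 - x ^ 2)) * J x = 0)
    (H : ℝ → ℝ)
    (hH : ∀ x, H x = ((1 + x) / (1 - x)) ^ (mu / 2) * J x) :
    ∀ x ∈ Set.Ioo (-1 : ℝ) 1,
      (1 - x ^ 2) * deriv (deriv H) x - 2 * (1 + lam) * x * deriv H x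
        + (nu * (nu + 1) - mu ^ 2 / (1 - x ^ 2)) * H x = 0 := by
  intro x hx
  set W : ℝ → ℝ := fun t => ((1 + t) / (1 - t)) ^ (mu / 2)
  set a : ℝ → ℝ := fun t => 2 * (mu / 2) / (1 - t ^ 2)
  have hW : ∀ y ∈ Ioo (-1 : ℝ) 1, HasDerivAt W (W y * a y) y :=
    fun y hy => hasDerivAt_one_add_div_one_sub_rpow hy (mu / 2)
  have hq : 1 - x ^ 2 ≠ 0 := by nlinarith [hx.1, hx.2]
  have ha : HasDerivAt a (mu * (2 * x) / (1 - x ^ 2) ^ 2) x := by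
    refine ((hasDerivAt_const x (2 * (mu / 2))).fun_div ((hasDerivAt_pow 2 x).const_sub 1)
      hq).congr_deriv ?_
    push_cast
    ring
  rw [show H = fun t => W t * J t from funext hH,
    deriv_deriv_mul_of_hasDerivAt_self_mul isOpen_Ioo hx hW hJ ha (hJ' x hx),
    (hasDerivAt_mul_of_hasDerivAt_self_mul (hW x hx) (hJ x hx)).deriv]
  have hode := hode x hx
  simp only [a]
  field_simp at hode ⊢
  linear_combination W x * hode
end
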